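/- If a behaviour (E₁,E₂,ω₁,ω₂) satisfies −1 ≤ Eₓ ≤ 1 and ωₓ ≥ 0 for x = 1,2, and moreover ω₁ + ω₂ ≥ 1, then it belongs to the quantum set Q. -/

import Mathlib

/-!
Sending the ground state `|j⟩` of `O = 1 - |j⟩⟨j|` in setting `j` and the orthogonal excited state
in the other setting, with `M` diagonal with entries `E`, realises any `E ∈ [-1,1]²` with energies
`0` at `j` and `1` elsewhere. Hence `(E, (0, s))` and `(E, (s, 0))` are quantum for
`s = ω₀ + ω₁ ≥ 1`, and `(E, ω)` is their convex combination with weights `ω₁ / s` and `ω₀ / s`.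
-/

open scoped ComplexOrder

noncomputable section

/-- A behaviour `(E, ω)` admits a (finite-dimensional) quantum representation. -/
def IsQuantumRep (E ω : Fin 2 → ℝ) : Prop :=
  ∃ (d : ℕ) (ρ : Fin 2 → Matrix (Fin d) (Fin d) ℂ)
    (M O : Matrix (Fin d) (Fin d) ℂ) (v : Fin d → ℂ),
    (∀ x, (ρ x).PosSemidef) ∧ (∀ x, (ρ x).trace = 1) ∧
    M.IsHermitian ∧ (1 - M).PosSemidef ∧ (1 + M).PosSemidef ∧
    O.IsHermitian ∧ O.mulVec v = 0 ∧ (∑ i, Complex.normSq (v i)) = 1 ∧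
    (O - (1 - Matrix.vecMulVec v (star v))).PosSemidef ∧
    (∀ x, (ρ x * M).trace = (E x : ℂ)) ∧
    (∀ x, ((ρ x * O).trace).re ≤ ω x)

/-- The quantum set `Q`: all finite convex combinations of behaviours with a
quantum representation. -/
def QuantumSet : Set ((Fin 2 → ℝ) × (Fin 2 → ℝ)) :=
  convexHull ℝ {b | IsQuantumRep b.1 b.2}

open Matrix

lemma Matrix.trace_diagonal_single_mul {n R : Type*} [Fintype n] [DecidableEq n]
    [NonAssocSemiring R] (i : n) (a : n → R) :
    (diagonal (Pi.single i 1) * diagonal a).trace = a i := by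
  simp [diagonal_mul_diagonal, trace_diagonal, Pi.single_apply]

lemma isQuantumRep_of_one_le_of_ne (E ω : Fin 2 → ℝ) (j : Fin 2)
    (hE : ∀ x, -1 ≤ E x ∧ E x ≤ 1) (hj : 0 ≤ ω j) (hne : ∀ x ≠ j, 1 ≤ ω x) :
    IsQuantumRep E ω := by
  have hv : vecMulVec (Pi.single j (1 : ℂ)) (star (Pi.single j 1)) =
      diagonal (Pi.single j 1) := by
    ext a b; simp [vecMulVec_apply, diagonal, Pi.single_apply]; aesop
  refine ⟨2, fun x => diagonal (Pi.single x 1), diagonal fun x => (E x : ℂ),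
    diagonal (1 - Pi.single j 1), Pi.single j 1, fun x => ?_, fun x => ?_, ?_, ?_, ?_, ?_, ?_,
    ?_, ?_, fun x => ?_, fun x => ?_⟩
  · exact posSemidef_diagonal_iff.mpr fun k => by
      simp only [Pi.single_apply]; split_ifs <;> simp
  · simp [trace_diagonal, Pi.single_apply]
  · exact isHermitian_diagonal_iff.mpr fun k => by simp [IsSelfAdjoint]
  · rw [← diagonal_one, diagonal_sub]
    exact posSemidef_diagonal_iff.mpr fun k => by simp [Complex.le_def, (hE k).2]
  · rw [← diagonal_one, diagonal_add]
    exact posSemidef_diagonal_iff.mpr fun k => by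
      simp [Complex.le_def]; linarith [(hE k).1]
  · exact isHermitian_diagonal_iff.mpr fun k => by simp [IsSelfAdjoint, Pi.single_apply]
  · ext k; simp [mulVec_diagonal, Pi.single_apply]; aesop
  · simp [Pi.single_apply]
  · rw [hv, ← diagonal_one, diagonal_sub, diagonal_sub]
    simpa using PosSemidef.zero
  · rw [trace_diagonal_single_mul]
  · rw [trace_diagonal_single_mul]
    by_cases hx : x = j
    · subst hx; simpa using hj
    · simpa [hx] using hne x hx

theorem mem_quantumSet_of_one_le_energy_sum (E ω : Fin 2 → ℝ)
    (hE : ∀ x, -1 ≤ E x ∧ E x ≤ 1) (hω : ∀ x, 0 ≤ ω x)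
    (hsum : 1 ≤ ω 0 + ω 1) :
    (E, ω) ∈ QuantumSet := by
  set s := ω 0 + ω 1
  have hs : 0 < s := by linarith
  have h₀ : (E, ![0, s]) ∈ QuantumSet := subset_convexHull ℝ _ <|
    isQuantumRep_of_one_le_of_ne E _ 0 hE le_rfl <| by simpa [Fin.forall_fin_two]
  have h₁ : (E, ![s, 0]) ∈ QuantumSet := subset_convexHull ℝ _ <|
    isQuantumRep_of_one_le_of_ne E _ 1 hE le_rfl <| by simpa [Fin.forall_fin_two]
  have hw : ω 1 / s + ω 0 / s = 1 := by rw [← add_div, add_comm, div_self hs.ne']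
  have hcomb : (ω 1 / s) • (E, ![0, s]) + (ω 0 / s) • (E, ![s, 0]) = (E, ω) := by
    ext x
    · simp [← add_smul, hw]
    · fin_cases x <;> simp [hs.ne']
  rw [← hcomb]
  exact convex_convexHull ℝ _ h₀ h₁ (div_nonneg (hω 1) hs.le) (div_nonneg (hω 0) hs.le) hw

end
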